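/- arXiv:1310.1970 — 2 statements merged into one kernel-verified Lean document; each statement's English description precedes it below -/
import Mathlib

section
/- (Multi-letter subadditivity of the Holevo quantity.) Let l ∈ ℕ, let W_1, …, W_l be cq-channels W_i : X → S(K_i) with the same finite input alphabet X and finite-dimensional output spaces K_i, and let p be a probability distribution on X^l with single-letter marginals p_i(x) = ∑_{x^l : x_i = x} p(x^l). Define χ(X^l; Q_1⋯Q_l) = S(∑_{x^l} p(x^l) W_1(x_1) ⊗ ⋯ ⊗ W_l(x_l)) - ∑_{x^l} p(x^l) S(W_1(x_1) ⊗ ⋯ ⊗ W_l(x_l)). Then χ(X^l; Q_1⋯Q_l) ≤ ∑_{i=1}^{l} χ(p_i, W_i). -/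
open scoped BigOperators Kronecker ComplexOrder
open Matrix Filter

noncomputable section

/-- `p` is a probability distribution on the finite type `Z`. -/
def IsProb {Z : Type*} [Fintype Z] (p : Z → ℝ) : Prop :=
  (∀ z, 0 ≤ p z) ∧ ∑ z, p z = 1

/-- `ρ` is a quantum state (density operator): positive semidefinite with trace 1. -/
def IsState {n : Type*} [Fintype n] (ρ : Matrix n n ℂ) : Prop :=
  ρ.PosSemidef ∧ ρ.trace = 1

/-- von Neumann entropy (base-2 logarithm), computed from the eigenvalues. -/
def vN {n : Type*} [Fintype n] [DecidableEq n] (ρ : Matrix n n ℂ) : ℝ :=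
  if h : ρ.IsHermitian then -∑ i, h.eigenvalues i * Real.logb 2 (h.eigenvalues i) else 0

/-- The Holevo quantity χ(q, T) of a cq-channel `T` with input distribution `q`. -/
def holevo {Z : Type*} [Fintype Z] {n : Type*} [Fintype n] [DecidableEq n]
    (q : Z → ℝ) (T : Z → Matrix n n ℂ) : ℝ :=
  vN (∑ z, (q z : ℂ) • T z) - ∑ z, q z * vN (T z)

/-- Tensor (Kronecker) product of a family of matrices, as a matrix on the product index. -/
def mProd {l : ℕ} {K : Fin l → Type*} (ρ : ∀ i, Matrix (K i) (K i) ℂ) :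
    Matrix (∀ i, K i) (∀ i, K i) ℂ :=
  fun a b => ∏ i, ρ i (a i) (b i)

/-- The `l`-fold memoryless extension `W^{⊗l}` of a ccq-MAC `W`. -/
def Wext {X Y n : Type*} (W : X → Y → Matrix n n ℂ) {l : ℕ}
    (x : Fin l → X) (y : Fin l → Y) : Matrix (Fin l → n) (Fin l → n) ℂ :=
  fun a b => ∏ i, W (x i) (y i) (a i) (b i)

/-- χ(X;Q|Y,U) for input distribution q(u) r(x|u) s(y|u). -/
def chiXQYU {U X Y : Type*} [Fintype U] [Fintype X] [Fintype Y]
    {n : Type*} [Fintype n] [DecidableEq n] (W : X → Y → Matrix n n ℂ)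
    (q : U → ℝ) (r : U → X → ℝ) (s : U → Y → ℝ) : ℝ :=
  ∑ u, ∑ y, q u * s u y * holevo (r u) (fun x => W x y)

/-- χ(Y;Q|X,U) for input distribution q(u) r(x|u) s(y|u). -/
def chiYQXU {U X Y : Type*} [Fintype U] [Fintype X] [Fintype Y]
    {n : Type*} [Fintype n] [DecidableEq n] (W : X → Y → Matrix n n ℂ)
    (q : U → ℝ) (r : U → X → ℝ) (s : U → Y → ℝ) : ℝ :=
  ∑ u, ∑ x, q u * r u x * holevo (s u) (fun y => W x y)

/-- χ(X,Y;Q|U) for input distribution q(u) r(x|u) s(y|u). -/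
def chiXYQU {U X Y : Type*} [Fintype U] [Fintype X] [Fintype Y]
    {n : Type*} [Fintype n] [DecidableEq n] (W : X → Y → Matrix n n ℂ)
    (q : U → ℝ) (r : U → X → ℝ) (s : U → Y → ℝ) : ℝ :=
  ∑ u, q u * holevo (fun xy : X × Y => r u xy.1 * s u xy.2) (fun xy : X × Y => W xy.1 xy.2)

/-- χ(X,Y;Q) for input distribution q(u) r(x|u) s(y|u). -/
def chiXYQ {U X Y : Type*} [Fintype U] [Fintype X] [Fintype Y]
    {n : Type*} [Fintype n] [DecidableEq n] (W : X → Y → Matrix n n ℂ)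
    (q : U → ℝ) (r : U → X → ℝ) (s : U → Y → ℝ) : ℝ :=
  holevo (fun xy : X × Y => ∑ u, q u * r u xy.1 * s u xy.2) (fun xy : X × Y => W xy.1 xy.2)

/-- An (M, N, C, D) conferencing code of blocklength `l` for a ccq-MAC with input
alphabets `X`, `Y` and output space `ℂ^d`.  The conferencing protocol is modelled
extensionally: `vtrans`/`wtrans` are the transcripts of the conference messages produced by
sender 1 resp. sender 2, subject to the causality constraints that the `i`-th message of
each sender depends only on its own message and the first `i-1` messages of the other
sender; the encoders of the two senders depend only on their own message and the
transcript they received. -/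
structure ConfCode (X Y : Type*) (d l M N : ℕ) (C D : ℝ) where
  K : ℕ
  V : Fin K → ℕ
  Wc : Fin K → ℕ
  Vpos : ∀ k, 0 < V k
  Wpos : ∀ k, 0 < Wc k
  rateC : ∑ k, Real.logb 2 (V k) ≤ C
  rateD : ∑ k, Real.logb 2 (Wc k) ≤ D
  vtrans : Fin M → Fin N → ∀ k, Fin (V k)
  wtrans : Fin M → Fin N → ∀ k, Fin (Wc k)
  vCausal : ∀ m n n' i, (∀ j, j < i → wtrans m n j = wtrans m n' j) →
      vtrans m n i = vtrans m n' i
  wCausal : ∀ m m' n i, (∀ j, j < i → vtrans m n j = vtrans m' n j) →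
      wtrans m n i = wtrans m' n i
  enc1 : Fin M → Fin N → Fin l → X
  enc2 : Fin M → Fin N → Fin l → Y
  enc1Conf : ∀ m n n', wtrans m n = wtrans m n' → enc1 m n = enc1 m n'
  enc2Conf : ∀ m m' n, vtrans m n = vtrans m' n → enc2 m n = enc2 m' n
  povm : Fin M → Fin N → Matrix (Fin l → Fin d) (Fin l → Fin d) ℂ
  povmPos : ∀ m n, (povm m n).PosSemidef
  povmSum : ((1 : Matrix (Fin l → Fin d) (Fin l → Fin d) ℂ) - ∑ m, ∑ n, povm m n).PosSemidef

/-- Average success probability of a conferencing code. -/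
def ConfCode.ps {X Y : Type*} {d l M N : ℕ} {C D : ℝ}
    (c : ConfCode X Y d l M N C D) (W : X → Y → Matrix (Fin d) (Fin d) ℂ) : ℝ :=
  (1 / ((M : ℝ) * (N : ℝ))) *
    ∑ m, ∑ n, (Matrix.trace (c.povm m n * Wext W (c.enc1 m n) (c.enc2 m n))).re

/-- Achievability of a rate pair for the ccq-MAC with conferencing encoders. -/
def ConfAchievable {X Y : Type*} {d : ℕ} (W : X → Y → Matrix (Fin d) (Fin d) ℂ)
    (C D RM RN : ℝ) : Prop :=
  ∃ (M N : ℕ → ℕ) (code : (l : ℕ) → ConfCode X Y d l (M l) (N l) C D),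
    (∀ l, 0 < M l) ∧ (∀ l, 0 < N l) ∧
    RM ≤ Filter.liminf (fun l : ℕ => Real.logb 2 (M l) / l) Filter.atTop ∧
    RN ≤ Filter.liminf (fun l : ℕ => Real.logb 2 (N l) / l) Filter.atTop ∧
    Filter.Tendsto (fun l : ℕ => (code l).ps W) Filter.atTop (nhds 1)

/-- The region `𝔯_conf(W, C, D)` of Theorem 1 (with auxiliary alphabet of size at most
`|X|·|Y| + 3`). -/
def confRegion {X Y : Type*} [Fintype X] [Fintype Y] {d : ℕ}
    (W : X → Y → Matrix (Fin d) (Fin d) ℂ) (C D : ℝ) : Set (ℝ × ℝ) :=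
  closure {R : ℝ × ℝ | 0 ≤ R.1 ∧ 0 ≤ R.2 ∧
    ∃ nU : ℕ, nU ≤ Fintype.card X * Fintype.card Y + 3 ∧
    ∃ (q : Fin nU → ℝ) (r : Fin nU → X → ℝ) (s : Fin nU → Y → ℝ),
      IsProb q ∧ (∀ u, IsProb (r u)) ∧ (∀ u, IsProb (s u)) ∧
      R.1 ≤ chiXQYU W q r s + C ∧
      R.2 ≤ chiYQXU W q r s + D ∧
      R.1 + R.2 ≤ chiXYQU W q r s + C + D ∧
      R.1 + R.2 ≤ chiXYQ W q r s}

/-- A code of blocklength `l` for the ccq-MAC with common messages. -/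
structure CommCode (X Y : Type*) (d l Kl Tl Ml : ℕ) where
  enc1 : Fin Kl → Fin Ml → Fin l → X
  enc2 : Fin Tl → Fin Ml → Fin l → Y
  povm : Fin Kl → Fin Tl → Fin Ml → Matrix (Fin l → Fin d) (Fin l → Fin d) ℂ
  povmPos : ∀ k t m, (povm k t m).PosSemidef
  povmSum : ((1 : Matrix (Fin l → Fin d) (Fin l → Fin d) ℂ) -
      ∑ k, ∑ t, ∑ m, povm k t m).PosSemidef

/-- Average success probability of a common-message code. -/
def CommCode.ps {X Y : Type*} {d l Kl Tl Ml : ℕ}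
    (c : CommCode X Y d l Kl Tl Ml) (W : X → Y → Matrix (Fin d) (Fin d) ℂ) : ℝ :=
  (1 / ((Kl : ℝ) * (Tl : ℝ) * (Ml : ℝ))) *
    ∑ k, ∑ t, ∑ m, (Matrix.trace (c.povm k t m * Wext W (c.enc1 k m) (c.enc2 t m))).re

/-- Achievability of a rate triple (S_X, S_Y, S_C) for the ccq-MAC with common messages. -/
def CommAchievable {X Y : Type*} {d : ℕ} (W : X → Y → Matrix (Fin d) (Fin d) ℂ)
    (SX SY SC : ℝ) : Prop :=
  ∃ (Kl Tl Ml : ℕ → ℕ) (code : (l : ℕ) → CommCode X Y d l (Kl l) (Tl l) (Ml l)),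
    (∀ l, 0 < Kl l) ∧ (∀ l, 0 < Tl l) ∧ (∀ l, 0 < Ml l) ∧
    SX ≤ Filter.liminf (fun l : ℕ => Real.logb 2 (Kl l) / l) Filter.atTop ∧
    SY ≤ Filter.liminf (fun l : ℕ => Real.logb 2 (Tl l) / l) Filter.atTop ∧
    SC ≤ Filter.liminf (fun l : ℕ => Real.logb 2 (Ml l) / l) Filter.atTop ∧
    Filter.Tendsto (fun l : ℕ => (code l).ps W) Filter.atTop (nhds 1)

/-- The region `𝔯_comm(W)`; a point is a triple `(S_C, S_X, S_Y)`. -/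
def commRegion {X Y : Type*} [Fintype X] [Fintype Y] {d : ℕ}
    (W : X → Y → Matrix (Fin d) (Fin d) ℂ) : Set (ℝ × ℝ × ℝ) :=
  closure {R : ℝ × ℝ × ℝ | 0 ≤ R.1 ∧ 0 ≤ R.2.1 ∧ 0 ≤ R.2.2 ∧
    ∃ (nU : ℕ) (q : Fin nU → ℝ) (r : Fin nU → X → ℝ) (s : Fin nU → Y → ℝ),
      IsProb q ∧ (∀ u, IsProb (r u)) ∧ (∀ u, IsProb (s u)) ∧
      R.2.1 ≤ chiXQYU W q r s ∧
      R.2.2 ≤ chiYQXU W q r s ∧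
      R.2.1 + R.2.2 ≤ chiXYQU W q r s ∧
      R.1 + R.2.1 + R.2.2 ≤ chiXYQ W q r s}

/-!
Let `ρ = ∑ p(xˡ) W₁(x₁) ⊗ ⋯ ⊗ W_l(x_l)` and `σᵢ = ∑ₓ pᵢ(x) Wᵢ(x)`. The entropy of a tensor product
of states is the sum of the entropies, so the averaged output entropies on both sides agree and
the claim reduces to `S(ρ) ≤ ∑ᵢ S(σᵢ)`. For any product basis `U₁ ⊗ ⋯ ⊗ U_l`, Klein's inequality
against the product of the single-letter marginals `dᵢ` of the diagonal of `ρ` gives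
`S(ρ) ≤ ∑ᵢ H(dᵢ)`; Klein's inequality itself is Gibbs' inequality once one notes that the squared
moduli of the entries of a unitary form a doubly stochastic matrix. Choosing `Uᵢ` to diagonalize
`σᵢ` makes `dᵢ` the spectrum of `σᵢ`, because `ρ` is a mixture of product states whose `i`-th
factors average to `σᵢ`; hence `H(dᵢ) = S(σᵢ)`.
-/

def shannonEntropy {α : Type*} [Fintype α] (w : α → ℝ) : ℝ :=
  -∑ a, w a * Real.logb 2 (w a)

section Spectral

variable {n : Type*} [Fintype n] [DecidableEq n]

theorem Matrix.IsHermitian.vN_eq {A : Matrix n n ℂ} (hA : A.IsHermitian) :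
    vN A = shannonEntropy hA.eigenvalues :=
  dif_pos hA

theorem Matrix.IsHermitian.eq_mul_diagonal_mul_conjTranspose {A : Matrix n n ℂ}
    (hA : A.IsHermitian) :
    A = (hA.eigenvectorUnitary : Matrix n n ℂ) * diagonal (fun i => (hA.eigenvalues i : ℂ)) *
      (hA.eigenvectorUnitary : Matrix n n ℂ)ᴴ := by
  conv_lhs => rw [hA.spectral_theorem, Unitary.conjStarAlgAut_apply]
  rfl

theorem Matrix.IsHermitian.conjTranspose_mul_mul_eq_diagonal {A : Matrix n n ℂ}
    (hA : A.IsHermitian) :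
    (hA.eigenvectorUnitary : Matrix n n ℂ)ᴴ * A * (hA.eigenvectorUnitary : Matrix n n ℂ) =
      diagonal (fun i => (hA.eigenvalues i : ℂ)) := by
  simpa [star_eq_conjTranspose, Function.comp_def] using
    hA.conjStarAlgAut_star_eigenvectorUnitary

theorem IsState.isProb_eigenvalues {A : Matrix n n ℂ} (hA : IsState A) :
    IsProb hA.1.isHermitian.eigenvalues := by
  refine ⟨hA.1.eigenvalues_nonneg, ?_⟩
  have h := hA.1.isHermitian.trace_eq_sum_eigenvalues.symm.trans hA.2
  simpa using congrArg RCLike.re h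

open Polynomial in
theorem vN_unitary_mul_diagonal_mul_conjTranspose {V : Matrix n n ℂ}
    (hV : V ∈ unitaryGroup n ℂ) (q : n → ℝ) :
    vN (V * diagonal (fun i => (q i : ℂ)) * Vᴴ) = shannonEntropy q := by
  have hA : (V * diagonal (fun i => (q i : ℂ)) * Vᴴ).IsHermitian :=
    isHermitian_mul_mul_conjTranspose _ (isHermitian_diagonal_of_self_adjoint _
      (funext fun i => Complex.conj_ofReal (q i)))
  have hcharpoly :
      (V * diagonal (fun i => (q i : ℂ)) * Vᴴ).charpoly = ∏ i, (X - C (q i : ℂ)) := by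
    rw [charpoly_mul_comm, ← Matrix.mul_assoc, ← star_eq_conjTranspose,
      (mem_unitaryGroup_iff').mp hV, Matrix.one_mul, charpoly_diagonal]
  have hspectrum : Finset.univ.val.map hA.eigenvalues = Finset.univ.val.map q := by
    apply Multiset.map_injective Complex.ofReal_injective
    have h := hA.roots_charpoly_eq_eigenvalues
    rw [hcharpoly, roots_prod _ _ (Finset.prod_ne_zero_iff.mpr fun i _ => X_sub_C_ne_zero _)] at h
    simpa [Multiset.map_map] using h.symm
  rw [hA.vN_eq, shannonEntropy, shannonEntropy, neg_inj]
  simpa only [Multiset.map_map, Function.comp_def, Finset.sum_eq_multiset_sum] using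
    congrArg (fun s : Multiset ℝ => (s.map fun t => t * Real.logb 2 t).sum) hspectrum

theorem trace_conjTranspose_mul_mul_of_mem_unitaryGroup {V : Matrix n n ℂ}
    (hV : V ∈ unitaryGroup n ℂ) (A : Matrix n n ℂ) : (Vᴴ * A * V).trace = A.trace := by
  rw [trace_mul_cycle, ← star_eq_conjTranspose, (mem_unitaryGroup_iff).mp hV, Matrix.one_mul]

theorem IsState.conjTranspose_mul_mul_of_mem_unitaryGroup {ρ V : Matrix n n ℂ} (hρ : IsState ρ)
    (hV : V ∈ unitaryGroup n ℂ) : IsState (Vᴴ * ρ * V) :=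
  ⟨hρ.1.conjTranspose_mul_mul_same V, by
    rw [trace_conjTranspose_mul_mul_of_mem_unitaryGroup hV, hρ.2]⟩

end Spectral

theorem IsState.sum_smul {Z n : Type*} [Fintype Z] [Fintype n] {p : Z → ℝ} (hp : IsProb p)
    {ρ : Z → Matrix n n ℂ} (hρ : ∀ z, IsState (ρ z)) : IsState (∑ z, (p z : ℂ) • ρ z) := by
  refine ⟨posSemidef_sum _ fun z _ => (hρ z).1.smul (Complex.zero_le_real.mpr (hp.1 z)), ?_⟩
  simp only [trace_sum, trace_smul, (hρ _).2, smul_eq_mul, mul_one, ← Complex.ofReal_sum, hp.2,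
    Complex.ofReal_one]

/-- `log x ≤ x - 1` at `x = s / t`, multiplied by `t`. -/
theorem mul_logb_add_sub_div_log_le {t s : ℝ} (ht : 0 ≤ t) (hs : 0 ≤ s) (hst : s = 0 → t = 0) :
    t * Real.logb 2 s + (t - s) / Real.log 2 ≤ t * Real.logb 2 t := by
  have hlog2 : 0 < Real.log 2 := Real.log_pos one_lt_two
  rcases ht.eq_or_lt with rfl | ht
  · simpa using div_nonpos_of_nonpos_of_nonneg (neg_nonpos.mpr hs) hlog2.le
  have hs : 0 < s := hs.lt_of_ne' fun h => ht.ne' (hst h)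
  have hlog : Real.log s - Real.log t ≤ s / t - 1 := by
    rw [← Real.log_div hs.ne' ht.ne']
    exact Real.log_le_sub_one_of_pos (div_pos hs ht)
  have hnat : t * Real.log s + (t - s) ≤ t * Real.log t := by
    have h := mul_le_mul_of_nonneg_left hlog ht.le
    rw [mul_sub, mul_sub, mul_div_cancel₀ _ ht.ne'] at h
    linarith
  simp only [Real.logb, ← mul_div_assoc, ← add_div]
  exact div_le_div_of_nonneg_right hnat hlog2.le

theorem shannonEntropy_le_of_mem_doublyStochastic {n : Type*} [Fintype n] [DecidableEq n]
    {w q : n → ℝ} (hw : IsProb w) (hq : IsProb q) {P : Matrix n n ℝ}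
    (hP : P ∈ doublyStochastic ℝ n) (hsupp : ∀ b, q b = 0 → (w ᵥ* P) b = 0) :
    shannonEntropy w ≤ -∑ b, (w ᵥ* P) b * Real.logb 2 (q b) := by
  obtain ⟨hP0, hrow, hcol⟩ := mem_doublyStochastic_iff_sum.mp hP
  have hpoint : ∀ a b, w a * P a b * Real.logb 2 (q b) + (w a - q b) * P a b / Real.log 2 ≤
      w a * P a b * Real.logb 2 (w a) := by
    intro a b
    rcases (hP0 a b).eq_or_lt with hab | hab
    · simp [← hab]
    have hst : q b = 0 → w a = 0 := fun h => by
      have hab0 := (Finset.sum_eq_zero_iff_of_nonneg fun a _ => mul_nonneg (hw.1 a) (hP0 a b)).mp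
        (hsupp b h) a (Finset.mem_univ a)
      exact (mul_eq_zero.mp hab0).resolve_right hab.ne'
    calc _ = (w a * Real.logb 2 (q b) + (w a - q b) / Real.log 2) * P a b := by ring
      _ ≤ w a * Real.logb 2 (w a) * P a b :=
        mul_le_mul_of_nonneg_right (mul_logb_add_sub_div_log_le (hw.1 a) (hq.1 b) hst) (hP0 a b)
      _ = _ := by ring
  have hmass : ∑ a, ∑ b, (w a - q b) * P a b / Real.log 2 = 0 := by
    simp only [← Finset.sum_div, sub_mul, Finset.sum_sub_distrib, ← Finset.mul_sum, hrow,
      Finset.sum_comm (γ := n) (f := fun a b => q b * P a b), hcol, mul_one, hw.2, hq.2,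
      sub_self, zero_div]
  have hsum := Finset.sum_le_sum fun a (_ : a ∈ Finset.univ) =>
    Finset.sum_le_sum fun b (_ : b ∈ Finset.univ) => hpoint a b
  simp only [Finset.sum_add_distrib, hmass, add_zero] at hsum
  have hentropy : ∑ a, ∑ b, w a * P a b * Real.logb 2 (w a) = ∑ a, w a * Real.logb 2 (w a) :=
    Finset.sum_congr rfl fun a _ => by
      simp only [← Finset.sum_mul, ← Finset.mul_sum, hrow, mul_one]
  simp only [shannonEntropy, vecMul, dotProduct, Finset.sum_mul]
  rw [Finset.sum_comm]
  linarith

theorem map_normSq_mem_doublyStochastic {n : Type*} [Fintype n] [DecidableEq n]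
    {M : Matrix n n ℂ} (hM : M ∈ unitaryGroup n ℂ) :
    M.map Complex.normSq ∈ doublyStochastic ℝ n := by
  refine mem_doublyStochastic_iff_sum.mpr ⟨fun a b => Complex.normSq_nonneg _, fun a => ?_,
    fun b => ?_⟩
  · have h := congrFun (congrFun ((mem_unitaryGroup_iff).mp hM) a) a
    simp only [mul_apply, star_apply, one_apply_eq, ← starRingEnd_apply, Complex.mul_conj] at h
    exact_mod_cast h
  · have h := congrFun (congrFun ((mem_unitaryGroup_iff').mp hM) b) b
    simp only [mul_apply, star_apply, one_apply_eq, ← starRingEnd_apply, mul_comm _ (M _ b),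
      Complex.mul_conj] at h
    exact_mod_cast h

section Klein

variable {n : Type*} [Fintype n] [DecidableEq n]

theorem re_conjTranspose_mul_diagonal_mul_apply_self (M : Matrix n n ℂ) (w : n → ℝ) (b : n) :
    ((Mᴴ * diagonal (fun a => (w a : ℂ)) * M) b b).re = (w ᵥ* M.map Complex.normSq) b := by
  rw [mul_apply]
  simp only [mul_diagonal, conjTranspose_apply, Complex.re_sum, vecMul, dotProduct, map_apply]
  refine Finset.sum_congr rfl fun a _ => ?_
  rw [mul_comm (star _), mul_assoc, ← starRingEnd_apply, ← Complex.normSq_eq_conj_mul_self,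
    ← Complex.ofReal_mul, Complex.ofReal_re]

/-- Klein's inequality, in the basis given by the columns of `V`. -/
theorem vN_le_neg_sum_re_diag_mul_logb {A V : Matrix n n ℂ} (hA : IsState A)
    (hV : V ∈ unitaryGroup n ℂ) {q : n → ℝ} (hq : IsProb q)
    (hsupp : ∀ b, q b = 0 → ((Vᴴ * A * V) b b).re = 0) :
    vN A ≤ -∑ b, ((Vᴴ * A * V) b b).re * Real.logb 2 (q b) := by
  set hH := hA.1.isHermitian
  set U : Matrix n n ℂ := (hH.eigenvectorUnitary : Matrix n n ℂ)
  have hM : Uᴴ * V ∈ unitaryGroup n ℂ := mul_mem (by simp [U, ← star_eq_conjTranspose]) hV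
  have hconj : Vᴴ * A * V =
      (Uᴴ * V)ᴴ * diagonal (fun a => (hH.eigenvalues a : ℂ)) * (Uᴴ * V) := by
    conv_lhs => rw [hH.eq_mul_diagonal_mul_conjTranspose]
    simp only [conjTranspose_mul, conjTranspose_conjTranspose, Matrix.mul_assoc, U]
  simp only [hconj, re_conjTranspose_mul_diagonal_mul_apply_self] at hsupp ⊢
  rw [hH.vN_eq]
  exact shannonEntropy_le_of_mem_doublyStochastic hA.isProb_eigenvalues hq
    (map_normSq_mem_doublyStochastic hM) hsupp

end Klein

section Marginal

variable {ι : Type*} [Fintype ι] [DecidableEq ι] {K : ι → Type*} [∀ i, Fintype (K i)]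
  [∀ i, DecidableEq (K i)]

def marginal {M : Type*} [AddCommMonoid M] (d : (∀ i, K i) → M) (i : ι) (j : K i) : M :=
  ∑ b, if b i = j then d b else 0

theorem sum_marginal_smul {R M : Type*} [Semiring R] [AddCommMonoid M] [Module R M]
    (d : (∀ i, K i) → R) (i : ι) (f : K i → M) :
    ∑ j, marginal d i j • f j = ∑ b, d b • f (b i) := by
  simp only [marginal, Finset.sum_smul, ite_smul, zero_smul]
  rw [Finset.sum_comm]
  exact Finset.sum_congr rfl fun b _ => by simp

theorem sum_marginal {R : Type*} [Semiring R] (d : (∀ i, K i) → R) (i : ι) :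
    ∑ j, marginal d i j = ∑ b, d b := by
  simpa using sum_marginal_smul d i fun _ => (1 : R)

theorem map_marginal {M N : Type*} [AddCommMonoid M] [AddCommMonoid N] (φ : M →+ N)
    (d : (∀ i, K i) → M) (i : ι) (j : K i) :
    φ (marginal d i j) = marginal (fun b => φ (d b)) i j := by
  simp only [marginal, map_sum, apply_ite φ, map_zero]

theorem marginal_sum_smul {Z R M : Type*} [Fintype Z] [Semiring R] [AddCommMonoid M]
    [Module R M] (c : Z → R) (d : Z → (∀ i, K i) → M) (i : ι) (j : K i) :
    marginal (fun b => ∑ z, c z • d z b) i j = ∑ z, c z • marginal (d z) i j := by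
  simp only [marginal, Finset.smul_sum, smul_ite, smul_zero]
  rw [Finset.sum_comm]
  exact Finset.sum_congr rfl fun b _ => by split_ifs <;> simp

theorem marginal_nonneg {M : Type*} [AddCommMonoid M] [PartialOrder M] [IsOrderedAddMonoid M]
    {d : (∀ i, K i) → M} (hd : ∀ b, 0 ≤ d b) (i : ι) (j : K i) : 0 ≤ marginal d i j :=
  Finset.sum_nonneg fun b _ => by split_ifs <;> simp [hd]

theorem le_marginal {M : Type*} [AddCommMonoid M] [PartialOrder M] [IsOrderedAddMonoid M]
    {d : (∀ i, K i) → M} (hd : ∀ b, 0 ≤ d b) (b : ∀ i, K i) (i : ι) :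
    d b ≤ marginal d i (b i) :=
  calc d b = if b i = b i then d b else 0 := (if_pos rfl).symm
    _ ≤ marginal d i (b i) := Finset.single_le_sum (f := fun b' => if b' i = b i then d b' else 0)
      (fun b' _ => by split_ifs <;> simp [hd]) (Finset.mem_univ b)

theorem marginal_prod {R : Type*} [CommSemiring R] (g : ∀ i, K i → R)
    (hg : ∀ i, ∑ k, g i k = 1) (i : ι) : marginal (fun b => ∏ i', g i' (b i')) i = g i := by
  funext j
  set h : ∀ i', K i' → R := Function.update g i fun k => if k = j then g i k else 0
  have hfactor : ∀ b : ∀ i', K i', (if b i = j then ∏ i', g i' (b i') else 0) =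
      ∏ i', h i' (b i') := by
    intro b
    have hrest : ∏ i' ∈ Finset.univ.erase i, h i' (b i') =
        ∏ i' ∈ Finset.univ.erase i, g i' (b i') :=
      Finset.prod_congr rfl fun i' hi' => by
        simp only [h, Function.update_of_ne (Finset.ne_of_mem_erase hi')]
    rw [← Finset.mul_prod_erase _ (fun i' => h i' (b i')) (Finset.mem_univ i), hrest,
      ← Finset.mul_prod_erase _ (fun i' => g i' (b i')) (Finset.mem_univ i)]
    simp only [h, Function.update_self]
    split_ifs <;> simp
  simp only [marginal, hfactor, ← Fintype.prod_sum]
  rw [← Finset.mul_prod_erase _ _ (Finset.mem_univ i),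
    Finset.prod_eq_one fun i' hi' => by
      simp only [h, Function.update_of_ne (Finset.ne_of_mem_erase hi'), hg]]
  simp [h]

theorem neg_sum_mul_logb_prod_eq_sum_shannonEntropy {d : (∀ i, K i) → ℝ} {w : ∀ i, K i → ℝ}
    (hd : ∀ i, marginal d i = w i) (hsupp : ∀ b, ∏ i, w i (b i) = 0 → d b = 0) :
    -∑ b, d b * Real.logb 2 (∏ i, w i (b i)) = ∑ i, shannonEntropy (w i) := by
  have hsplit : ∀ b, d b * Real.logb 2 (∏ i, w i (b i)) = ∑ i, d b * Real.logb 2 (w i (b i)) := by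
    intro b
    by_cases h : ∏ i, w i (b i) = 0
    · simp [hsupp b h]
    · rw [Real.logb_prod _ _ fun i _ => Finset.prod_ne_zero_iff.mp h i (Finset.mem_univ i),
        Finset.mul_sum]
  rw [Finset.sum_congr rfl fun b _ => hsplit b, Finset.sum_comm, ← Finset.sum_neg_distrib]
  refine Finset.sum_congr rfl fun i _ => ?_
  calc -∑ b, d b * Real.logb 2 (w i (b i))
      = -∑ j, marginal d i j * Real.logb 2 (w i j) := by
        simpa only [smul_eq_mul] using congrArg Neg.neg
          (sum_marginal_smul d i fun j => Real.logb 2 (w i j)).symm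
    _ = shannonEntropy (w i) := by rw [hd i, shannonEntropy]

end Marginal

section MProd

variable {l : ℕ} {K : Fin l → Type*}

theorem mProd_mul [∀ i, Fintype (K i)] (A B : ∀ i, Matrix (K i) (K i) ℂ) :
    mProd (fun i => A i * B i) = mProd A * mProd B := by
  ext a c
  simp only [mProd, mul_apply, Fintype.prod_sum, Finset.prod_mul_distrib]

theorem mProd_conjTranspose (A : ∀ i, Matrix (K i) (K i) ℂ) :
    (mProd A)ᴴ = mProd (fun i => (A i)ᴴ) := by
  ext a b
  simp only [mProd, conjTranspose_apply, star_prod]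

theorem mProd_diagonal [∀ i, DecidableEq (K i)] (d : ∀ i, K i → ℂ) :
    mProd (fun i => diagonal (d i)) = diagonal (fun b => ∏ i, d i (b i)) := by
  ext a b
  by_cases h : a = b
  · simp [h, mProd]
  · obtain ⟨i, hi⟩ := Function.ne_iff.mp h
    rw [diagonal_apply_ne _ h]
    exact Finset.prod_eq_zero (Finset.mem_univ i) (diagonal_apply_ne _ hi)

theorem mProd_one [∀ i, DecidableEq (K i)] :
    mProd (fun i => (1 : Matrix (K i) (K i) ℂ)) = 1 := by
  simpa using mProd_diagonal (K := K) fun _ _ => 1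

theorem trace_mProd [∀ i, Fintype (K i)] (A : ∀ i, Matrix (K i) (K i) ℂ) :
    (mProd A).trace = ∏ i, (A i).trace := by
  simp only [trace, diag, mProd, Fintype.prod_sum]

theorem mProd_mem_unitaryGroup [∀ i, Fintype (K i)] [∀ i, DecidableEq (K i)]
    {U : ∀ i, Matrix (K i) (K i) ℂ} (hU : ∀ i, U i ∈ unitaryGroup (K i) ℂ) :
    mProd U ∈ unitaryGroup (∀ i, K i) ℂ := by
  rw [mem_unitaryGroup_iff, star_eq_conjTranspose, mProd_conjTranspose, ← mProd_mul]
  simp_rw [← star_eq_conjTranspose, (mem_unitaryGroup_iff).mp (hU _), mProd_one]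

theorem conjTranspose_mProd_mul_mProd_mul_mProd [∀ i, Fintype (K i)]
    (U A : ∀ i, Matrix (K i) (K i) ℂ) :
    (mProd U)ᴴ * mProd A * mProd U = mProd (fun i => (U i)ᴴ * A i * U i) := by
  rw [mProd_conjTranspose, ← mProd_mul, ← mProd_mul]

end MProd

section MProdState

variable {l : ℕ} {K : Fin l → Type*} [∀ i, Fintype (K i)] [∀ i, DecidableEq (K i)]

theorem mProd_eq_mul_diagonal_mul_conjTranspose {A : ∀ i, Matrix (K i) (K i) ℂ}
    (hA : ∀ i, (A i).IsHermitian) :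
    mProd A = mProd (fun i => ((hA i).eigenvectorUnitary : Matrix (K i) (K i) ℂ)) *
      diagonal (fun b => ((∏ i, (hA i).eigenvalues (b i) : ℝ) : ℂ)) *
      (mProd (fun i => ((hA i).eigenvectorUnitary : Matrix (K i) (K i) ℂ)))ᴴ := by
  conv_lhs => rw [show A = _ from funext fun i => (hA i).eq_mul_diagonal_mul_conjTranspose]
  rw [mProd_mul, mProd_mul, mProd_diagonal, mProd_conjTranspose]
  push_cast
  rfl

theorem IsState.mProd {A : ∀ i, Matrix (K i) (K i) ℂ} (hA : ∀ i, IsState (A i)) :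
    IsState (mProd A) := by
  refine ⟨?_, by simp only [trace_mProd, fun i => (hA i).2, Finset.prod_const_one]⟩
  rw [mProd_eq_mul_diagonal_mul_conjTranspose fun i => (hA i).1.isHermitian]
  refine (PosSemidef.diagonal fun b => ?_).mul_mul_conjTranspose_same _
  exact Complex.zero_le_real.mpr (Finset.prod_nonneg fun i _ => (hA i).isProb_eigenvalues.1 _)

theorem vN_mProd {A : ∀ i, Matrix (K i) (K i) ℂ} (hA : ∀ i, IsState (A i)) :
    vN (mProd A) = ∑ i, vN (A i) := by
  have hH i := (hA i).1.isHermitian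
  rw [mProd_eq_mul_diagonal_mul_conjTranspose hH, vN_unitary_mul_diagonal_mul_conjTranspose
    (mProd_mem_unitaryGroup fun i => (hH i).eigenvectorUnitary.2), shannonEntropy,
    neg_sum_mul_logb_prod_eq_sum_shannonEntropy
      (marginal_prod _ fun i => (hA i).isProb_eigenvalues.2) fun _ h => h]
  simp only [fun i => (hH i).vN_eq]

theorem vN_le_sum_shannonEntropy_marginal_diag {ρ : Matrix (∀ i, K i) (∀ i, K i) ℂ}
    (hρ : IsState ρ) {U : ∀ i, Matrix (K i) (K i) ℂ} (hU : ∀ i, U i ∈ unitaryGroup (K i) ℂ) :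
    vN ρ ≤ ∑ i, shannonEntropy (marginal (fun b => (((mProd U)ᴴ * ρ * mProd U) b b).re) i) := by
  have hV := mProd_mem_unitaryGroup hU
  set d := fun b => (((mProd U)ᴴ * ρ * mProd U) b b).re
  have hconj := hρ.conjTranspose_mul_mul_of_mem_unitaryGroup hV
  have hd0 : ∀ b, 0 ≤ d b := fun b => (Complex.nonneg_iff.mp hconj.1.diag_nonneg).1
  have hd1 : ∑ b, d b = 1 := by
    simpa only [trace, diag, Complex.re_sum, Complex.one_re] using congrArg Complex.re hconj.2
  have hq : IsProb fun b : ∀ i, K i => ∏ i, marginal d i (b i) :=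
    ⟨fun b => Finset.prod_nonneg fun i _ => marginal_nonneg hd0 i _, by
      rw [← Fintype.prod_sum, Finset.prod_eq_one fun i _ => by rw [sum_marginal, hd1]]⟩
  have hsupp : ∀ b, ∏ i, marginal d i (b i) = 0 → d b = 0 := fun b h => by
    obtain ⟨i, -, hi⟩ := Finset.prod_eq_zero_iff.mp h
    exact le_antisymm (hi ▸ le_marginal hd0 b i) (hd0 b)
  calc vN ρ ≤ -∑ b, d b * Real.logb 2 (∏ i, marginal d i (b i)) :=
        vN_le_neg_sum_re_diag_mul_logb hρ hV hq hsupp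
    _ = _ := neg_sum_mul_logb_prod_eq_sum_shannonEntropy (fun _ => rfl) hsupp

theorem marginal_diag_conjTranspose_mProd_mul_sum_smul_mProd {Z : Type*} [Fintype Z]
    (c : Z → ℂ) {ρ : Z → ∀ i, Matrix (K i) (K i) ℂ} (hρ : ∀ z i, (ρ z i).trace = 1)
    {U : ∀ i, Matrix (K i) (K i) ℂ} (hU : ∀ i, U i ∈ unitaryGroup (K i) ℂ) (i : Fin l) :
    marginal (fun b => ((mProd U)ᴴ * (∑ z, c z • mProd (ρ z)) * mProd U) b b) i =
      fun j => ((U i)ᴴ * (∑ z, c z • ρ z i) * U i) j j := by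
  funext j
  have htrace : ∀ z i', ∑ k, ((U i')ᴴ * ρ z i' * U i') k k = 1 := fun z i' =>
    (trace_conjTranspose_mul_mul_of_mem_unitaryGroup (hU i') _).trans (hρ z i')
  simp only [Matrix.mul_sum, Matrix.sum_mul, Matrix.mul_smul, Matrix.smul_mul,
    conjTranspose_mProd_mul_mProd_mul_mProd, Matrix.sum_apply, Matrix.smul_apply]
  rw [marginal_sum_smul]
  refine Finset.sum_congr rfl fun z _ => congrArg (c z • ·) ?_
  exact congrFun (marginal_prod (fun i' k => ((U i')ᴴ * ρ z i' * U i') k k) (htrace z) i) j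

theorem vN_sum_smul_mProd_le {Z : Type*} [Fintype Z] {p : Z → ℝ} (hp : IsProb p)
    {ρ : Z → ∀ i, Matrix (K i) (K i) ℂ} (hρ : ∀ z i, IsState (ρ z i)) :
    vN (∑ z, (p z : ℂ) • mProd (ρ z)) ≤ ∑ i, vN (∑ z, (p z : ℂ) • ρ z i) := by
  have hσ : ∀ i, (∑ z, (p z : ℂ) • ρ z i).IsHermitian := fun i =>
    (IsState.sum_smul hp fun z => hρ z i).1.isHermitian
  have hstate := IsState.sum_smul hp fun z => IsState.mProd (hρ z)
  have hU : ∀ i, ((hσ i).eigenvectorUnitary : Matrix (K i) (K i) ℂ) ∈ unitaryGroup (K i) ℂ :=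
    fun i => (hσ i).eigenvectorUnitary.2
  refine (vN_le_sum_shannonEntropy_marginal_diag hstate hU).trans_eq
    (Finset.sum_congr rfl fun i _ => ?_)
  rw [(hσ i).vN_eq]
  congr 1
  funext j
  rw [← Complex.coe_reAddGroupHom, ← map_marginal,
    marginal_diag_conjTranspose_mProd_mul_sum_smul_mProd _ (fun z i => (hρ z i).2) hU,
    (hσ i).conjTranspose_mul_mul_eq_diagonal]
  simp

end MProdState

/-- **Multi-letter subadditivity of the Holevo quantity**:
χ(Xˡ; Q₁⋯Q_l) ≤ ∑ᵢ χ(pᵢ, Wᵢ), the `pᵢ` being the single-letter marginals of `p`. -/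
theorem holevo_multi_letter_subadditive {X : Type*} [Fintype X] [DecidableEq X]
    (l : ℕ) (K : Fin l → Type*) [∀ i, Fintype (K i)] [∀ i, DecidableEq (K i)]
    (W : ∀ i, X → Matrix (K i) (K i) ℂ) (hW : ∀ i x, IsState (W i x))
    (p : (Fin l → X) → ℝ) (hp : IsProb p) :
    holevo p (fun xs : Fin l → X => mProd (fun i => W i (xs i))) ≤
      ∑ i, holevo (fun x : X => ∑ xs : Fin l → X, if xs i = x then p xs else 0) (W i) := by
  have hσ : ∀ i, ∑ x, ((∑ xs : Fin l → X, if xs i = x then p xs else 0 : ℝ) : ℂ) • W i x =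
      ∑ xs, (p xs : ℂ) • W i (xs i) := fun i => by
    rw [← sum_marginal_smul (K := fun _ => X)]
    simp only [marginal, Complex.ofReal_sum, apply_ite Complex.ofReal, Complex.ofReal_zero]
  have hcond : ∑ xs, p xs * vN (mProd fun i => W i (xs i)) =
      ∑ i, ∑ x, (∑ xs : Fin l → X, if xs i = x then p xs else 0) * vN (W i x) := by
    simp only [vN_mProd fun i => hW i _, Finset.mul_sum]
    rw [Finset.sum_comm]
    exact Finset.sum_congr rfl fun i _ => by
      simpa only [smul_eq_mul, marginal] using
        (sum_marginal_smul (K := fun _ => X) p i fun x => vN (W i x)).symm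
  unfold holevo
  simp only [Finset.sum_sub_distrib, hcond, hσ]
  exact sub_le_sub_right (vN_sum_smul_mProd_le hp fun xs i => hW i (xs i)) _

end
end

section
/- (Auxiliary alphabet reduction for the ccq-MAC, via Lemma 3 of Ahlswede–Körner.) Let W : X × Y → S(K) be a ccq-MAC, let U' be a finite set, and let p'(u',x,y) = q'(u') r'(x|u') s'(y|u') be a distribution on U' × X × Y. Then there exist a finite set U with |U| ≤ |X|·|Y| + 3 and a distribution p(u,x,y) = q(u) r(x|u) s(y|u) on U × X × Y such that the induced marginal distribution on X × Y is unchanged (∑_u q(u) r(x|u) s(y|u) = ∑_{u'} q'(u') r'(x|u') s'(y|u') for all (x,y)) and the four quantities coincide: χ(X;Q|Y,U) = χ(X';Q'|Y',U'), χ(Y;Q|X,U) = χ(Y';Q'|X',U'), χ(X,Y;Q|U) = χ(X',Y';Q'|U'), and χ(X,Y;Q) = χ(X',Y';Q'), where primed quantities are evaluated with respect to p' and unprimed ones with respect to p. -/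
open scoped BigOperators Kronecker ComplexOrder
open Matrix Filter

noncomputable section

/-
The per-letter quantities all enter linearly in `q'`: the marginal on `X × Y` and the three
conditional Holevo quantities are averages over `u'` of functions of `u'`. Mapping each letter `u'`
to the vector of these values (dropping one coordinate of the marginal, which is fixed by total
mass) lands in `ℝ^(|X||Y| + 2)`, and the `q'`-average is a point of the convex hull of the image.
By Carathéodory it is a convex combination of at most `|X||Y| + 3` image points; these points
and their weights form the new distribution on `U`. The unconditional quantity `χ(X,Y;Q)`
depends only on the marginal.
-/

theorem IsProb.nonempty {Z : Type*} [Fintype Z] {p : Z → ℝ} (hp : IsProb p) : Nonempty Z := by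
  by_contra h
  rw [not_nonempty_iff] at h
  simpa using hp.2

theorem isProb_jointMarginal {U X Y : Type*} [Fintype U] [Fintype X] [Fintype Y]
    {q : U → ℝ} {r : U → X → ℝ} {s : U → Y → ℝ}
    (hq : IsProb q) (hr : ∀ u, IsProb (r u)) (hs : ∀ u, IsProb (s u)) :
    IsProb (fun xy : X × Y => ∑ u, q u * r u xy.1 * s u xy.2) := by
  refine ⟨fun xy => Finset.sum_nonneg fun u _ =>
    mul_nonneg (mul_nonneg (hq.1 u) ((hr u).1 _)) ((hs u).1 _), ?_⟩
  rw [Finset.sum_comm]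
  simp only [Fintype.sum_prod_type, ← Finset.mul_sum, (hs _).2, mul_one, (hr _).2, hq.2]

theorem eq_of_sum_eq_of_forall_ne {Z : Type*} [Fintype Z] {p p' : Z → ℝ} {z₀ : Z}
    (hsum : ∑ z, p z = ∑ z, p' z) (h : ∀ z, z ≠ z₀ → p z = p' z) : p = p' := by
  classical
  funext z
  by_cases hz : z = z₀
  · subst hz
    rw [← Finset.add_sum_erase _ _ (Finset.mem_univ z),
      ← Finset.add_sum_erase _ _ (Finset.mem_univ z),
      Finset.sum_congr rfl fun z' hz' => h z' (Finset.ne_of_mem_erase hz')] at hsum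
    linarith
  · exact h z hz

theorem exists_fin_reindex_preserving_averages {ι J : Type*} [Fintype ι] [Fintype J]
    {w : ι → ℝ} (hw : IsProb w) (φ : J → ι → ℝ) :
    ∃ n ≤ Fintype.card J + 1, ∃ (v : Fin n → ℝ) (g : Fin n → ι),
      IsProb v ∧ ∀ j, ∑ i, v i * φ j (g i) = ∑ u, w u * φ j u := by
  let F : ι → J → ℝ := fun u j => φ j u
  have hmean : ∑ u, w u • F u ∈ convexHull ℝ (Set.range F) :=
    (convex_convexHull ℝ _).sum_mem (fun u _ => hw.1 u) hw.2
      fun u _ => subset_convexHull ℝ _ (Set.mem_range_self u)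
  obtain ⟨κ, _, z, v, hz, hind, hv, hv1, hvz⟩ := eq_pos_convex_span_of_mem_convexHull hmean
  choose g hg using fun k => hz (Set.mem_range_self k)
  have hcard : Fintype.card κ ≤ Fintype.card J + 1 := by
    have := (Submodule.finrank_le (vectorSpan ℝ (Set.range z))).trans_eq
      (Module.finrank_fintype_fun_eq_card ℝ : Module.finrank ℝ (J → ℝ) = _)
    exact hind.card_le_finrank_succ.trans (by omega)
  let e := (Fintype.equivFin κ).symm
  refine ⟨_, hcard, v ∘ e, g ∘ e, ⟨fun i => (hv _).le, (e.sum_comp v).trans hv1⟩,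
    fun j => ?_⟩
  have hj := congrFun hvz j
  simp only [Finset.sum_apply, Pi.smul_apply, smul_eq_mul, ← hg, F] at hj
  rw [← hj]
  exact e.sum_comp fun k => v k * φ j (g k)

theorem chiXQYU_eq_sum_mul {U X Y : Type*} [Fintype U] [Fintype X] [Fintype Y]
    {n : Type*} [Fintype n] [DecidableEq n] (W : X → Y → Matrix n n ℂ)
    (q : U → ℝ) (r : U → X → ℝ) (s : U → Y → ℝ) :
    chiXQYU W q r s = ∑ u, q u * ∑ y, s u y * holevo (r u) (fun x => W x y) := by
  simp only [chiXQYU, Finset.mul_sum, mul_assoc]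

theorem chiYQXU_eq_sum_mul {U X Y : Type*} [Fintype U] [Fintype X] [Fintype Y]
    {n : Type*} [Fintype n] [DecidableEq n] (W : X → Y → Matrix n n ℂ)
    (q : U → ℝ) (r : U → X → ℝ) (s : U → Y → ℝ) :
    chiYQXU W q r s = ∑ u, q u * ∑ x, r u x * holevo (s u) (fun y => W x y) := by
  simp only [chiYQXU, Finset.mul_sum, mul_assoc]

theorem alphabet_reduction_general {X Y U' : Type*} [Fintype X] [Fintype Y] [Fintype U'] {d : ℕ}
    (W : X → Y → Matrix (Fin d) (Fin d) ℂ)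
    (q' : U' → ℝ) (r' : U' → X → ℝ) (s' : U' → Y → ℝ)
    (hq' : IsProb q') (hr' : ∀ u, IsProb (r' u)) (hs' : ∀ u, IsProb (s' u)) :
    ∃ nU : ℕ, nU ≤ Fintype.card X * Fintype.card Y + 3 ∧
    ∃ (q : Fin nU → ℝ) (r : Fin nU → X → ℝ) (s : Fin nU → Y → ℝ),
      IsProb q ∧ (∀ u, IsProb (r u)) ∧ (∀ u, IsProb (s u)) ∧
      (∀ x y, ∑ u, q u * r u x * s u y = ∑ u, q' u * r' u x * s' u y) ∧
      chiXQYU W q r s = chiXQYU W q' r' s' ∧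
      chiYQXU W q r s = chiYQXU W q' r' s' ∧
      chiXYQU W q r s = chiXYQU W q' r' s' ∧
      chiXYQ W q r s = chiXYQ W q' r' s' := by
  classical
  obtain ⟨xy₀⟩ := (isProb_jointMarginal hq' hr' hs').nonempty
  obtain ⟨n, hn, q, g, hq, hg⟩ := exists_fin_reindex_preserving_averages hq'
    (Sum.elim (fun (xy : {xy : X × Y // xy ≠ xy₀}) u => r' u xy.1.1 * s' u xy.1.2)
      ![fun u => ∑ y, s' u y * holevo (r' u) (fun x => W x y),
        fun u => ∑ x, r' u x * holevo (s' u) (fun y => W x y),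
        fun u => holevo (fun xy : X × Y => r' u xy.1 * s' u xy.2) (fun xy => W xy.1 xy.2)])
  have hcard : n ≤ Fintype.card X * Fintype.card Y + 3 := by
    have := Fintype.card_pos_iff.2 ⟨xy₀⟩
    simp only [Fintype.card_sum, Fintype.card_subtype_compl, Fintype.card_unique,
      Fintype.card_fin, Fintype.card_prod] at hn this
    omega
  have hr : ∀ i, IsProb (r' (g i)) := fun i => hr' (g i)
  have hs : ∀ i, IsProb (s' (g i)) := fun i => hs' (g i)
  have hmarg : (fun xy : X × Y => ∑ i, q i * r' (g i) xy.1 * s' (g i) xy.2) =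
      fun xy => ∑ u, q' u * r' u xy.1 * s' u xy.2 :=
    eq_of_sum_eq_of_forall_ne (z₀ := xy₀)
      ((isProb_jointMarginal hq hr hs).2.trans (isProb_jointMarginal hq' hr' hs').2.symm)
      fun xy hxy => by simpa only [Sum.elim_inl, mul_assoc] using hg (Sum.inl ⟨xy, hxy⟩)
  refine ⟨n, hcard, q, fun i => r' (g i), fun i => s' (g i), hq, hr, hs,
    fun x y => congrFun hmarg (x, y), ?_, ?_, hg (Sum.inr 2), congrArg (holevo · _) hmarg⟩
  · rw [chiXQYU_eq_sum_mul, chiXQYU_eq_sum_mul]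
    exact hg (Sum.inr 0)
  · rw [chiYQXU_eq_sum_mul, chiYQXU_eq_sum_mul]
    exact hg (Sum.inr 1)

/-- **Auxiliary alphabet reduction** (via Lemma 3 of Ahlswede–Körner): any input
distribution `q'(u') r'(x|u') s'(y|u')` on `U' × X × Y` can be replaced by one on an
alphabet `U` with `|U| ≤ |X|·|Y| + 3` without changing the induced distribution on
`X × Y` or any of the four Holevo information quantities. -/
theorem alphabet_reduction {X Y U' : Type*} [Fintype X] [Fintype Y] [Fintype U'] {d : ℕ}
    (W : X → Y → Matrix (Fin d) (Fin d) ℂ) (hW : ∀ x y, IsState (W x y))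
    (q' : U' → ℝ) (r' : U' → X → ℝ) (s' : U' → Y → ℝ)
    (hq' : IsProb q') (hr' : ∀ u, IsProb (r' u)) (hs' : ∀ u, IsProb (s' u)) :
    ∃ nU : ℕ, nU ≤ Fintype.card X * Fintype.card Y + 3 ∧
    ∃ (q : Fin nU → ℝ) (r : Fin nU → X → ℝ) (s : Fin nU → Y → ℝ),
      IsProb q ∧ (∀ u, IsProb (r u)) ∧ (∀ u, IsProb (s u)) ∧
      (∀ x y, ∑ u, q u * r u x * s u y = ∑ u, q' u * r' u x * s' u y) ∧
      chiXQYU W q r s = chiXQYU W q' r' s' ∧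
      chiYQXU W q r s = chiYQXU W q' r' s' ∧
      chiXYQU W q r s = chiXYQU W q' r' s' ∧
      chiXYQ W q r s = chiXYQ W q' r' s' :=
  alphabet_reduction_general W q' r' s' hq' hr' hs'

end
end
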